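/- arXiv:2412.17220 — 3 statements merged into one kernel-verified Lean document; each statement's English description precedes it below -/
import Mathlib

section
/- Let a and b be positive elements of a unital C*-algebra A, and define the linear map T : A → A by T(x) = a x - x b. Then the operator norm of T satisfies ‖T‖ ≤ max{‖a‖ - ‖b⁻¹‖⁻¹, ‖b‖ - ‖a⁻¹‖⁻¹}, where ‖a⁻¹‖⁻¹ is interpreted as 0 if a is not invertible, and likewise for b. -/
/-!
Replacing `a` and `b` by `a - c` and `b - c` for a real scalar `c` does not change `T`, and
`‖T‖ ≤ ‖a - c‖ + ‖b - c‖`. The spectrum of `a` lies in `[‖a⁻¹‖⁻¹, ‖a‖]` and that of `b` in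
`[‖b⁻¹‖⁻¹, ‖b‖]`, so `‖a - c‖` and `‖b - c‖` are at most the distances from `c` to the farther
endpoint of each interval; for `c` the mean of the four endpoints their sum is at most the claimed
bound.
-/

open ContinuousLinearMap

section GeneralizedDerivation

variable {𝕜 A : Type*} [NontriviallyNormedField 𝕜] [NormedRing A] [NormedAlgebra 𝕜 A]

lemma opNorm_mul_flip_apply_le (b : A) : ‖(mul 𝕜 A).flip b‖ ≤ ‖b‖ :=
  opNorm_le_bound _ (norm_nonneg b) fun x ↦ by
    simpa [mul_comm ‖b‖] using norm_mul_le x b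

lemma opNorm_mul_sub_mul_flip_le (a b : A) :
    ‖mul 𝕜 A a - (mul 𝕜 A).flip b‖ ≤ ‖a‖ + ‖b‖ :=
  (norm_sub_le _ _).trans (add_le_add (opNorm_mul_apply_le 𝕜 A a) (opNorm_mul_flip_apply_le b))

lemma mul_sub_mul_flip_sub_algebraMap {R : Type*} [CommSemiring R] [Algebra R A]
    (a b : A) (r : R) :
    mul 𝕜 A (a - algebraMap R A r) - (mul 𝕜 A).flip (b - algebraMap R A r) =
      mul 𝕜 A a - (mul 𝕜 A).flip b := by
  ext x
  simp only [sub_apply, flip_apply, mul_apply', sub_mul, mul_sub, Algebra.commutes]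
  abel

end GeneralizedDerivation

section CStarAlgebra

variable {A : Type*} [CStarAlgebra A] [PartialOrder A] [StarOrderedRing A]

lemma IsSelfAdjoint.norm_sub_algebraMap_le [Nontrivial A] {a : A} (ha : IsSelfAdjoint a)
    {m M : ℝ} (hm : algebraMap ℝ A m ≤ a) (hM : a ≤ algebraMap ℝ A M) (c : ℝ) :
    ‖a - algebraMap ℝ A c‖ ≤ max (M - c) (c - m) := by
  have hs : IsSelfAdjoint (a - algebraMap ℝ A c) := ha.sub (.algebraMap A (.all c))
  have hle : a - algebraMap ℝ A c ≤ algebraMap ℝ A (M - c) := by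
    rw [map_sub]; exact sub_le_sub_right hM _
  have hge : algebraMap ℝ A (m - c) ≤ a - algebraMap ℝ A c := by
    rw [map_sub]; exact sub_le_sub_right hm _
  rw [le_algebraMap_iff_spectrum_le hs] at hle
  rw [algebraMap_le_iff_le_spectrum hs] at hge
  rcases CStarAlgebra.norm_or_neg_norm_mem_spectrum hs with h | h
  · exact le_max_of_le_left (hle _ h)
  · exact le_max_of_le_right (by linarith [hge _ h])

lemma algebraMap_norm_ringInverse_inv_le [Nontrivial A] {a : A} (ha : 0 ≤ a) :
    algebraMap ℝ A ‖Ring.inverse a‖⁻¹ ≤ a := by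
  by_cases hu : IsUnit a
  swap
  · simpa [Ring.inverse_non_unit _ hu] using ha
  obtain ⟨u, rfl⟩ := hu
  refine algebraMap_le_of_le_spectrum fun r hr ↦ ?_
  have hr0 : 0 < r := lt_of_le_of_ne (spectrum_nonneg_of_nonneg ha hr)
    (spectrum.ne_zero_of_mem_of_unit hr).symm
  have hr_inv : r⁻¹ ∈ spectrum ℝ (↑u⁻¹ : A) :=
    spectrum.inv_mem_iff (r := Units.mk0 r hr0.ne') |>.mp hr
  rw [Ring.inverse_unit]
  exact inv_le_of_inv_le₀ hr0 <|
    (Real.le_norm_self _).trans (spectrum.norm_le_norm_of_mem hr_inv)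

end CStarAlgebra

lemma max_sub_add_max_sub_le (M₁ m₁ M₂ m₂ : ℝ) :
    max (M₁ - (M₁ + M₂ + m₁ + m₂) / 4) ((M₁ + M₂ + m₁ + m₂) / 4 - m₁) +
      max (M₂ - (M₁ + M₂ + m₁ + m₂) / 4) ((M₁ + M₂ + m₁ + m₂) / 4 - m₂) ≤
      max (M₁ - m₂) (M₂ - m₁) := by
  simp only [max_def]
  split_ifs <;> linarith

/-- **Stampfli-type bound.**  Let `a` and `b` be positive elements of a unital C*-algebra `A`
and let `T : A → A` be the bounded linear map `x ↦ a * x - x * b`.  Then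
`‖T‖ ≤ max (‖a‖ - ‖a⁻¹‖⁻¹') (‖b‖ - ‖b⁻¹‖⁻¹')` where the inverse-norm terms are interpreted
as `0` when the element is not invertible (this is exactly the behaviour of `Ring.inverse`,
which returns `0` on non-units, combined with `(0 : ℝ)⁻¹ = 0`). -/
theorem stmt0 {A : Type*} [CStarAlgebra A] [PartialOrder A] [StarOrderedRing A]
    (a b : A) (ha : 0 ≤ a) (hb : 0 ≤ b) :
    ‖ContinuousLinearMap.mul ℂ A a - (ContinuousLinearMap.mul ℂ A).flip b‖ ≤
      max (‖a‖ - ‖Ring.inverse b‖⁻¹) (‖b‖ - ‖Ring.inverse a‖⁻¹) := by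
  obtain _ | _ := subsingleton_or_nontrivial A
  · simp [Subsingleton.elim a 0, Subsingleton.elim b 0]
  set c : ℝ := (‖a‖ + ‖b‖ + ‖Ring.inverse a‖⁻¹ + ‖Ring.inverse b‖⁻¹) / 4
  have hac := (IsSelfAdjoint.of_nonneg ha).norm_sub_algebraMap_le
    (algebraMap_norm_ringInverse_inv_le ha) (IsSelfAdjoint.of_nonneg ha).le_algebraMap_norm_self c
  have hbc := (IsSelfAdjoint.of_nonneg hb).norm_sub_algebraMap_le
    (algebraMap_norm_ringInverse_inv_le hb) (IsSelfAdjoint.of_nonneg hb).le_algebraMap_norm_self c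
  calc _ = ‖mul ℂ A (a - algebraMap ℝ A c) - (mul ℂ A).flip (b - algebraMap ℝ A c)‖ := by
        rw [mul_sub_mul_flip_sub_algebraMap]
    _ ≤ ‖a - algebraMap ℝ A c‖ + ‖b - algebraMap ℝ A c‖ := opNorm_mul_sub_mul_flip_le _ _
    _ ≤ _ := (add_le_add hac hbc).trans (max_sub_add_max_sub_le _ _ _ _)
end

section
/- Let ψ be a state on a C*-algebra A. If there exists a ∈ A with ψ(a) = ‖a‖ ≠ 0, then there exists a positive element b ∈ A with ‖b‖ = 1 such that ψ(b) = 1 and ψ(b c) = ψ(c) = ψ(c b) for all c ∈ A. -/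
/-!
Normalize the given `a` to `u = a / ‖a‖`, so `‖u‖ = 1 = ψ u`. Whenever `‖b‖ ≤ 1` and `ψ b = 1`,
an increasing approximate unit `(e)` converges to `star b` in the GNS space of `ψ`, because
`‖e - star b‖² = ψ ((e - b) (e - star b)) ≤ (1 - Re ψ (e star b)) + (1 - Re ψ (b e)) → 0`.
Hence `ψ (b c) = ⟪star b, c⟫ = lim ψ (e c) = ψ c`, and taking adjoints gives `ψ (c b) = ψ c`.
Applied to `u` this yields `ψ (star u * u) = ψ (star u) = 1`, so `b = star u * u` works.
-/

open scoped ComplexOrder InnerProductSpace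
open Filter Topology

namespace PositiveLinearMap

variable {A : Type*} [NonUnitalCStarAlgebra A] [PartialOrder A] (f : A →ₚ[ℂ] ℂ)

lemma re_apply_mul_le_one (hf : ∀ x, ‖f x‖ ≤ ‖x‖) {x y : A} (hx : ‖x‖ ≤ 1) (hy : ‖y‖ ≤ 1) :
    (f (x * y)).re ≤ 1 :=
  calc (f (x * y)).re ≤ ‖f (x * y)‖ := Complex.re_le_norm _
    _ ≤ ‖x * y‖ := hf _
    _ ≤ ‖x‖ * ‖y‖ := norm_mul_le x y
    _ ≤ 1 := mul_le_one₀ hx (norm_nonneg y) hy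

variable [StarOrderedRing A]

theorem tendsto_toPreGNS_of_apply_eq_one (hf : ∀ x, ‖f x‖ ≤ ‖x‖) {l : Filter A}
    (hl : l.IsIncreasingApproximateUnit) {b : A} (hb : ‖b‖ ≤ 1) (hfb : f b = 1) :
    Tendsto (fun e ↦ f.toPreGNS e) l (𝓝 (f.toPreGNS (star b))) := by
  have hbound : ∀ᶠ e in l, ‖f.toPreGNS e - f.toPreGNS (star b)‖ ^ 2 ≤
      (1 - (f (e * star b)).re) + (1 - (f (b * e)).re) := by
    filter_upwards [hl.eventually_star_eq, hl.eventually_norm] with e he_star he_norm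
    have hexpand : star (e - star b) * (e - star b) = e * e - e * star b - b * e + b * star b := by
      rw [star_sub, he_star, star_star]; noncomm_ring
    rw [@norm_sq_eq_re_inner ℂ, ← map_sub, preGNS_inner_def, ofPreGNS_toPreGNS, hexpand]
    simp only [map_add, map_sub, RCLike.re_to_complex]
    linarith [f.re_apply_mul_le_one hf he_norm he_norm,
      f.re_apply_mul_le_one hf hb ((norm_star b).trans_le hb)]
  have hlim : Tendsto (fun e ↦ (1 - (f (e * star b)).re) + (1 - (f (b * e)).re)) l (𝓝 0) := by
    have hre : Continuous fun x ↦ (f x).re := Complex.continuous_re.comp (map_continuous f)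
    have h₁ : Tendsto (fun e ↦ (f (e * star b)).re) l (𝓝 1) := by
      simpa [Function.comp_def, map_star, hfb] using
        hre.tendsto (star b) |>.comp (hl.tendsto_mul_right (star b))
    have h₂ : Tendsto (fun e ↦ (f (b * e)).re) l (𝓝 1) := by
      simpa [Function.comp_def, hfb] using hre.tendsto b |>.comp (hl.tendsto_mul_left b)
    have h₀ : Tendsto (fun _ ↦ (1 : ℝ)) l (𝓝 1) := tendsto_const_nhds
    simpa using (h₀.sub h₁).add (h₀.sub h₂)
  rw [tendsto_iff_norm_sub_tendsto_zero]
  simpa using (squeeze_zero' (.of_forall fun _ ↦ sq_nonneg _) hbound hlim).sqrt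

theorem apply_mul_eq_of_apply_eq_one (hf : ∀ x, ‖f x‖ ≤ ‖x‖) {b : A} (hb : ‖b‖ ≤ 1)
    (hfb : f b = 1) (c : A) : f (b * c) = f c := by
  have hl := CStarAlgebra.increasingApproximateUnit A
  have hinner := (f.tendsto_toPreGNS_of_apply_eq_one hf hl hb hfb).inner
    (tendsto_const_nhds (x := f.toPreGNS c)) (𝕜 := ℂ)
  simp only [preGNS_inner_def, ofPreGNS_toPreGNS, star_star] at hinner
  refine tendsto_nhds_unique (hinner.congr' ?_) ((map_continuous f).tendsto c |>.comp
    (hl.tendsto_mul_right c))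
  filter_upwards [hl.eventually_star_eq] with e he using by simp [he]

theorem apply_mul_eq_of_apply_eq_one' (hf : ∀ x, ‖f x‖ ≤ ‖x‖) {b : A} (hb : ‖b‖ ≤ 1)
    (hfb : f b = 1) (c : A) : f (c * b) = f c := by
  have h := f.apply_mul_eq_of_apply_eq_one hf ((norm_star b).trans_le hb)
    (by rw [map_star, hfb, star_one]) (star c)
  rwa [← star_mul, map_star, map_star, star_inj] at h

end PositiveLinearMap

/-- Let `ψ` be a state on a C*-algebra `A` (a positive linear functional of norm one).
If there exists `a ∈ A` with `ψ(a) = ‖a‖ ≠ 0`, then there exists a positive element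
`b ∈ A` with `‖b‖ = 1` such that `ψ(b) = 1` and `ψ(bc) = ψ(c) = ψ(cb)` for all `c ∈ A`. -/
theorem stmt13 {A : Type*} [NonUnitalCStarAlgebra A] [PartialOrder A] [StarOrderedRing A]
    (ψ : A →L[ℂ] ℂ)
    (hpos : ∀ a : A, 0 ≤ a → 0 ≤ ψ a)
    (hnorm : ‖ψ‖ = 1)
    (hcs : ∃ a : A, ψ a = (‖a‖ : ℂ) ∧ ‖a‖ ≠ 0) :
    ∃ b : A, 0 ≤ b ∧ ‖b‖ = 1 ∧ ψ b = 1 ∧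
      ∀ c : A, ψ (b * c) = ψ c ∧ ψ (c * b) = ψ c := by
  obtain ⟨a, ha, hna⟩ := hcs
  let f : A →ₚ[ℂ] ℂ := .mk₀ ψ hpos
  have hf : ∀ x, ‖f x‖ ≤ ‖x‖ := fun x ↦ (ψ.le_opNorm x).trans_eq (by rw [hnorm, one_mul])
  set u : A := (‖a‖⁻¹ : ℂ) • a
  have hu : ‖u‖ = 1 := by simp [u, norm_smul, hna]
  have hfu : f u = 1 := show ψ u = 1 by simp [u, ha, hna]
  have hfb : f (star u * u) = 1 := by
    rw [f.apply_mul_eq_of_apply_eq_one' hf hu.le hfu, map_star, hfu, star_one]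
  have hb : ‖star u * u‖ = 1 := by rw [CStarRing.norm_star_mul_self, hu, one_mul]
  exact ⟨star u * u, star_mul_self_nonneg u, hb, hfb, fun c ↦
    ⟨f.apply_mul_eq_of_apply_eq_one hf hb.le hfb c,
      f.apply_mul_eq_of_apply_eq_one' hf hb.le hfb c⟩⟩
end

section
/- Let ℳ be a set of bounded operators on a Hilbert space H closed under the ternary product (x,y,z) ↦ x y* z (a ternary ring of operators). Then the closed linear span of ℳℳ*ℳ equals the closed linear span of ℳ. -/
-- elementary bound: for s ∈ [0,1] and k ≥ 1, s * (1-s)^k ≤ 1/k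
private lemma aux_poly_bound {s : ℝ} (h0 : 0 ≤ s) (h1 : s ≤ 1) {k : ℕ} (hk : 1 ≤ k) :
    s * (1 - s) ^ k ≤ 1 / k := by
  have hk0 : (0:ℝ) < k := by exact_mod_cast hk
  rw [le_div_iff₀ hk0]
  have h2 : (1 + (k:ℝ) * s) ≤ (1 + s) ^ k := one_add_mul_le_pow (by linarith) k
  have h3 : (0:ℝ) ≤ (1 - s) ^ k := pow_nonneg (by linarith) k
  have h4 : (1 - s) ^ k * (1 + (k:ℝ) * s) ≤ 1 := by
    calc (1 - s) ^ k * (1 + (k:ℝ) * s) ≤ (1 - s) ^ k * (1 + s) ^ k :=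
          mul_le_mul_of_nonneg_left h2 h3
      _ = ((1 - s) * (1 + s)) ^ k := (mul_pow _ _ _).symm
      _ = (1 - s * s) ^ k := by ring_nf
      _ ≤ 1 := pow_le_one₀ (by nlinarith) (by nlinarith)
  nlinarith [pow_nonneg (sub_nonneg.2 h1) k]

set_option maxHeartbeats 1000000 in
private lemma key_mem_closure {H : Type*} [NormedAddCommGroup H] [InnerProductSpace ℂ H]
    [CompleteSpace H] (ℳ : Set (H →L[ℂ] H))
    (hternary : ∀ x ∈ ℳ, ∀ y ∈ ℳ, ∀ z ∈ ℳ, x * star y * z ∈ ℳ)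
    {x : H →L[ℂ] H} (hx : x ∈ ℳ) :
    x ∈ closure (Submodule.span ℂ
      {w : H →L[ℂ] H | ∃ x ∈ ℳ, ∃ y ∈ ℳ, ∃ z ∈ ℳ, w = x * star y * z} : Set (H →L[ℂ] H)) := by
  set S : Set (H →L[ℂ] H) :=
    {w : H →L[ℂ] H | ∃ x ∈ ℳ, ∃ y ∈ ℳ, ∃ z ∈ ℳ, w = x * star y * z} with hSdef
  set a : H →L[ℂ] H := star x * x with ha
  have hsa : IsSelfAdjoint a := IsSelfAdjoint.star_mul_self x
  -- powers stay in ℳ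
  have hpow : ∀ k : ℕ, x * a ^ k ∈ ℳ := by
    intro k
    induction k with
    | zero => simpa using hx
    | succ k ih =>
      have heq : x * a ^ (k + 1) = x * a ^ k * star x * x := by
        rw [pow_succ, ha, ← mul_assoc, ← mul_assoc]
      rw [heq]
      exact hternary _ ih _ hx _ hx
  have hS : ∀ k : ℕ, x * a ^ (k + 1) ∈ S := by
    intro k
    refine ⟨x * a ^ k, hpow k, x, hx, x, hx, ?_⟩
    rw [pow_succ, ha, ← mul_assoc, ← mul_assoc]
  -- span S is stable under right multiplication by a
  have hSa : ∀ w ∈ S, w * a ∈ S := by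
    rintro w ⟨p, hp, q, hq, r, hr, rfl⟩
    exact ⟨p * star q * r, hternary _ hp _ hq _ hr, x, hx, x, hx, by rw [ha, ← mul_assoc]⟩
  have hspanSa : ∀ w ∈ Submodule.span ℂ S, w * a ∈ Submodule.span ℂ S := by
    intro w hw
    have hmap : Submodule.map (LinearMap.mulRight ℂ a) (Submodule.span ℂ S)
        ≤ Submodule.span ℂ S := by
      rw [Submodule.map_span]
      refine Submodule.span_le.2 ?_
      rintro _ ⟨w, hw, rfl⟩
      exact Submodule.subset_span (hSa w hw)
    exact hmap ⟨w, hw, rfl⟩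
  -- the main algebraic membership
  have hmain : ∀ (r : ℝ) (n : ℕ),
      x - x * ((1 : H →L[ℂ] H) - r • a) ^ n ∈ Submodule.span ℂ S := by
    intro r n
    induction n with
    | zero => simpa using Submodule.zero_mem _
    | succ n ih =>
      have hb : x - x * ((1 : H →L[ℂ] H) - r • a) ^ (n + 1)
          = (x - x * ((1 : H →L[ℂ] H) - r • a) ^ n)
            + r • ((x * ((1 : H →L[ℂ] H) - r • a) ^ n) * a) := by
        have h1 : x * ((1 : H →L[ℂ] H) - r • a) ^ (n + 1)
            = x * ((1 : H →L[ℂ] H) - r • a) ^ n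
              - r • ((x * ((1 : H →L[ℂ] H) - r • a) ^ n) * a) := by
          rw [pow_succ, ← mul_assoc, mul_sub, mul_one, mul_smul_comm]
        rw [h1]; abel
      rw [hb]
      refine Submodule.add_mem _ ih (Submodule.smul_of_tower_mem _ r ?_)
      have : x * ((1 : H →L[ℂ] H) - r • a) ^ n
          = x - (x - x * ((1 : H →L[ℂ] H) - r • a) ^ n) := (sub_sub_cancel x _).symm
      rw [this, sub_mul]
      refine Submodule.sub_mem _ ?_ (hspanSa _ ih)
      simpa using Submodule.subset_span (hS 0)
  -- now the analytic approximation
  rw [Metric.mem_closure_iff]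
  intro ε hε
  by_cases ha0 : a = 0
  · have hx0 : x = 0 := by
      have : ‖x‖ * ‖x‖ = 0 := by
        rw [← CStarRing.norm_star_mul_self, ← ha, ha0, norm_zero]
      have := mul_self_eq_zero.mp this
      simpa [norm_eq_zero] using this
    exact ⟨0, Submodule.zero_mem _, by simp [hx0, hε]⟩
  · rcases subsingleton_or_nontrivial H with hH | hH
    · exact ⟨0, Submodule.zero_mem _, by
        have : x = 0 := Subsingleton.elim _ _
        simp [this, hε]⟩
    have hM : 0 < ‖a‖ := norm_pos_iff.mpr ha0
    set r : ℝ := ‖a‖⁻¹ with hr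
    -- pick n
    obtain ⟨n, hn⟩ := exists_nat_gt (‖a‖ / ε ^ 2)
    have hn1 : 1 ≤ n + 1 := Nat.le_add_left 1 n
    set N := n + 1 with hN
    have hNpos : (0:ℝ) < N := by positivity
    have hbound : ‖a‖ / N < ε ^ 2 := by
      rw [div_lt_iff₀ hNpos]
      have h1 : ‖a‖ / ε ^ 2 < N := lt_of_lt_of_le hn (by exact_mod_cast Nat.le_succ n)
      calc ‖a‖ = (‖a‖ / ε ^ 2) * ε ^ 2 := by field_simp
        _ < N * ε ^ 2 := by
            exact mul_lt_mul_of_pos_right h1 (by positivity)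
        _ = ε ^ 2 * N := by ring
    -- the approximant
    refine ⟨x - x * ((1 : H →L[ℂ] H) - r • a) ^ N, hmain r N, ?_⟩
    rw [dist_eq_norm]
    have hd : x - (x - x * ((1 : H →L[ℂ] H) - r • a) ^ N)
        = x * ((1 : H →L[ℂ] H) - r • a) ^ N := sub_sub_cancel x _
    rw [hd]
    set b : H →L[ℂ] H := (1 : H →L[ℂ] H) - r • a with hbdef
    have hbsa : IsSelfAdjoint b := by
      rw [hbdef, IsSelfAdjoint, star_sub, star_one, star_smul, hsa.star_eq, star_trivial]
    -- C*-identity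
    have hnorm2 : ‖x * b ^ N‖ ^ 2 = ‖b ^ N * a * b ^ N‖ := by
      rw [sq, ← CStarRing.norm_star_mul_self]
      congr 1
      rw [star_mul, (hbsa.pow N).star_eq, ha]
      noncomm_ring
    -- identify with cfc
    have hcfcb : cfc (fun t : ℝ => 1 - r * t) a = b := by
      rw [cfc_sub (R := ℝ) (fun _ => (1:ℝ)) (fun t => r * t) a, cfc_const (1:ℝ) a, map_one,
        cfc_const_mul_id r a, hbdef]
    have hcfc : cfc (fun t : ℝ => (1 - r * t) ^ N * t * (1 - r * t) ^ N) a
        = b ^ N * a * b ^ N := by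
      rw [cfc_mul (R := ℝ) _ _ a, cfc_mul (R := ℝ) _ _ a, cfc_pow (R := ℝ) _ N a,
        cfc_id' (R := ℝ) a, hcfcb]
    have hspec : ∀ t ∈ spectrum ℝ a, ‖(1 - r * t) ^ N * t * (1 - r * t) ^ N‖ ≤ ‖a‖ / N := by
      intro t ht
      have ht0 : 0 ≤ t := spectrum_star_mul_self_nonneg t (by rwa [← ha])
      have htM : t ≤ ‖a‖ := by
        have := spectrum.norm_le_norm_of_mem (𝕜 := ℝ) (a := a) ht
        rwa [Real.norm_eq_abs, abs_of_nonneg ht0] at this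
      set s : ℝ := r * t with hs
      have hs0 : 0 ≤ s := by positivity
      have hs1 : s ≤ 1 := by
        rw [hs, hr]
        rw [inv_mul_le_iff₀ hM, mul_one]
        exact htM
      have hteq : t = ‖a‖ * s := by
        rw [hs, hr]; field_simp
      have key : s * (1 - s) ^ (2 * N) ≤ 1 / ((2 * N : ℕ) : ℝ) :=
        aux_poly_bound (k := 2 * N) hs0 hs1 (by rw [hN]; omega)
      have hval : (1 - s) ^ N * t * (1 - s) ^ N = ‖a‖ * (s * (1 - s) ^ (2 * N)) := by
        rw [hteq]; ring
      rw [Real.norm_eq_abs, hval, abs_of_nonneg (mul_nonneg (norm_nonneg a)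
        (mul_nonneg hs0 ((even_two_mul N).pow_nonneg _)))]
      calc ‖a‖ * (s * (1 - s) ^ (2 * N)) ≤ ‖a‖ * (1 / ((2 * N : ℕ) : ℝ)) :=
            mul_le_mul_of_nonneg_left key hM.le
        _ ≤ ‖a‖ / N := by
            rw [mul_one_div]
            apply div_le_div_of_nonneg_left hM.le hNpos
            exact_mod_cast Nat.le_mul_of_pos_left N two_pos
    have hnormcfc : ‖b ^ N * a * b ^ N‖ ≤ ‖a‖ / N := by
      rw [← hcfc]
      exact norm_cfc_le (by positivity) hspec
    have : ‖x * b ^ N‖ ^ 2 < ε ^ 2 := by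
      rw [hnorm2]; exact lt_of_le_of_lt hnormcfc hbound
    exact lt_of_pow_lt_pow_left₀ 2 hε.le this

/-- **Ternary rings of operators.**  Let `ℳ` be a set of bounded operators on a Hilbert
space `H` closed under the ternary product `(x, y, z) ↦ x y* z`.  Then the closed linear
span of `ℳ ℳ* ℳ = {x y* z : x, y, z ∈ ℳ}` equals the closed linear span of `ℳ`. -/
theorem stmt18 {H : Type*} [NormedAddCommGroup H] [InnerProductSpace ℂ H] [CompleteSpace H]
    (ℳ : Set (H →L[ℂ] H))
    (hternary : ∀ x ∈ ℳ, ∀ y ∈ ℳ, ∀ z ∈ ℳ, x * star y * z ∈ ℳ) :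
    closure (Submodule.span ℂ
        {w : H →L[ℂ] H | ∃ x ∈ ℳ, ∃ y ∈ ℳ, ∃ z ∈ ℳ, w = x * star y * z} : Set (H →L[ℂ] H)) =
      closure (Submodule.span ℂ ℳ : Set (H →L[ℂ] H)) := by
  apply subset_antisymm
  · apply closure_mono
    have h1 : {w : H →L[ℂ] H | ∃ x ∈ ℳ, ∃ y ∈ ℳ, ∃ z ∈ ℳ, w = x * star y * z} ⊆ ℳ := by
      rintro w ⟨p, hp, q, hq, r, hr, rfl⟩
      exact hternary _ hp _ hq _ hr
    exact Submodule.span_mono h1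
  · have h2 : (ℳ : Set (H →L[ℂ] H)) ⊆ closure (Submodule.span ℂ
        {w : H →L[ℂ] H | ∃ x ∈ ℳ, ∃ y ∈ ℳ, ∃ z ∈ ℳ, w = x * star y * z} : Set (H →L[ℂ] H)) :=
      fun x hx => key_mem_closure ℳ hternary hx
    have h3 : (Submodule.span ℂ ℳ : Set (H →L[ℂ] H)) ⊆ closure (Submodule.span ℂ
        {w : H →L[ℂ] H | ∃ x ∈ ℳ, ∃ y ∈ ℳ, ∃ z ∈ ℳ, w = x * star y * z} : Set (H →L[ℂ] H)) := by
      have := Submodule.span_le (R := ℂ)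
        (p := (Submodule.span ℂ
          {w : H →L[ℂ] H | ∃ x ∈ ℳ, ∃ y ∈ ℳ, ∃ z ∈ ℳ, w = x * star y * z}).topologicalClosure)
        (s := ℳ) |>.mpr ?_
      · exact this
      · exact h2
    exact closure_minimal h3 isClosed_closure
end
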